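/- If xs : List Turn has odd length, then reversal promotes into interleaving with the alternating stream lr via inversion: List.reverse (lr ▷ xs) = (Stream'.map inv lr) ▷ List.reverse xs. -/
import Mathlib


inductive Turn : Type
  | L
  | R
deriving DecidableEq

open Turn

def inv : Turn → Turn
  | L => R
  | R => L

def interleave {α : Type*} : Stream' α → List α → List α
  | zs, [] => [zs.head]
  | zs, y :: ys => zs.head :: y :: interleave zs.tail ys

infixr:67 " ▷ " => interleave

def lr : Stream' Turn := fun n => if n % 2 = 0 then L else R

def rl : Stream' Turn := fun n => if n % 2 = 0 then R else L

lemma map_inv_lr : Stream'.map inv lr = rl := by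
  funext n
  by_cases h : n % 2 = 0 <;> simp [Stream'.map, Stream'.get, lr, rl, h, inv]

lemma lr_tail : lr.tail = rl := by
  funext n
  by_cases h : n % 2 = 0
  · have h2 : (n + 1) % 2 = 1 := by omega
    simp [Stream'.tail, Stream'.get, lr, rl, h, h2]
  · have h2 : (n + 1) % 2 = 0 := by omega
    simp [Stream'.tail, Stream'.get, lr, rl, h, h2]

lemma rl_tail : rl.tail = lr := by
  funext n
  by_cases h : n % 2 = 0
  · have h2 : (n + 1) % 2 = 1 := by omega
    simp [Stream'.tail, Stream'.get, lr, rl, h, h2]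
  · have h2 : (n + 1) % 2 = 0 := by omega
    simp [Stream'.tail, Stream'.get, lr, rl, h, h2]

lemma lr_head : lr.head = L := rfl
lemma rl_head : rl.head = R := rfl

lemma interleave_concat {α : Type*} (ys : List α) (zs : Stream' α) (b : α) :
    zs ▷ (ys ++ [b]) = (zs ▷ ys) ++ [b, zs (ys.length + 1)] := by
  induction ys generalizing zs with
  | nil => rfl
  | cons y ys ih =>
      show zs.head :: y :: (zs.tail ▷ (ys ++ [b])) = _
      rw [ih]
      rfl

lemma aux : ∀ (n : ℕ) (xs : List Turn), xs.length = n → Odd n →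
    (lr ▷ xs).reverse = rl ▷ xs.reverse ∧ (rl ▷ xs).reverse = lr ▷ xs.reverse := by
  intro n
  induction n using Nat.strong_induction_on with
  | _ n ih =>
    intro xs hlen hodd
    cases xs with
    | nil =>
      simp only [List.length_nil] at hlen
      subst hlen
      exact absurd hodd (by decide)
    | cons a ys =>
      rcases ys.eq_nil_or_concat with rfl | ⟨ws, b, rfl⟩
      · subst hlen
        refine ⟨?_, ?_⟩ <;> cases a <;> decide
      · simp only [List.concat_eq_append]
        have hw : ws.length + 2 = n := by simpa using hlen
        have hodd' : Odd ws.length := by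
          rw [Nat.odd_iff] at hodd ⊢; omega
        have hlt : ws.length < n := by omega
        obtain ⟨ih1, ih2⟩ := ih ws.length hlt ws rfl hodd'
        have h1 : (ws.length + 1) % 2 = 0 := by
          rw [Nat.odd_iff] at hodd'; omega
        have hrlv : rl (ws.length + 1) = R := by simp [rl, h1]
        have hlrv : lr (ws.length + 1) = L := by simp [lr, h1]
        constructor
        · show (interleave lr (a :: (ws ++ [b]))).reverse = _
          rw [show interleave lr (a :: (ws ++ [b]))
                = lr.head :: a :: (lr.tail ▷ (ws ++ [b])) from rfl,
              lr_tail, lr_head, interleave_concat, hrlv]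
          rw [show (a :: (ws ++ [b])).reverse = b :: (ws.reverse ++ [a]) by simp,
              show interleave rl (b :: (ws.reverse ++ [a]))
                = rl.head :: b :: (rl.tail ▷ (ws.reverse ++ [a])) from rfl,
              rl_tail, rl_head, interleave_concat]
          simp [ih2, hlrv]
        · show (interleave rl (a :: (ws ++ [b]))).reverse = _
          rw [show interleave rl (a :: (ws ++ [b]))
                = rl.head :: a :: (rl.tail ▷ (ws ++ [b])) from rfl,
              rl_tail, rl_head, interleave_concat, hlrv]
          rw [show (a :: (ws ++ [b])).reverse = b :: (ws.reverse ++ [a]) by simp,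
              show interleave lr (b :: (ws.reverse ++ [a]))
                = lr.head :: b :: (lr.tail ▷ (ws.reverse ++ [a])) from rfl,
              lr_tail, lr_head, interleave_concat]
          simp [ih1, hrlv]

theorem reverse_interleave_lr (xs : List Turn) (hodd : Odd xs.length) :
    List.reverse (lr ▷ xs) = (Stream'.map inv lr) ▷ List.reverse xs := by
  rw [map_inv_lr]
  exact (aux xs.length xs rfl hodd).1
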